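/- arXiv:2602.21856 — 3 statements merged into one kernel-verified Lean document; each statement's English description precedes it below -/
import Mathlib

section
/- There exists an optimal solution of the max-min rate power allocation problem at which all users achieve the same rate. Precisely: let N ≥ 1 and for each n ∈ {1,…,N} let R_n : ℝ^N → ℝ be continuous on the power simplex Δ, satisfy R_n(p) = 0 whenever p_n = 0, be strictly increasing in its own coordinate p_n (if p and q agree in all coordinates except n and p_n < q_n, then R_n(p) < R_n(q)), and be nonincreasing in every other coordinate p_i, i ≠ n. Then there exists p* ∈ Δ such that min_n R_n(p*) = sup_{p ∈ Δ} min_n R_n(p) and R_1(p*) = R_2(p*) = ⋯ = R_N(p*). -/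
/-!
The min-rate `p ↦ minₙ Rₙ(p)` is continuous on the compact simplex, so its maximizers form a
nonempty compact set; pick one, `p*`, of least total power. If some user `m` had
`Rₘ(p*) > minₙ Rₙ(p*)`, lowering `p*ₘ` slightly would keep `Rₘ` above the minimum by continuity
and could only raise the other rates, which are nonincreasing in `pₘ`. This is again a
maximizer, of smaller total power. Since `R(0) = 0` the optimal value is `≥ 0`, which rules
out `p*ₘ = 0`.
-/

open Function Set Topology

theorem ContinuousOn.iInf_apply {α ι : Type*} [TopologicalSpace α] [Fintype ι] [Nonempty ι]
    {f : ι → α → ℝ} {s : Set α} (hf : ∀ i, ContinuousOn (f i) s) :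
    ContinuousOn (fun x ↦ ⨅ i, f i x) s := by
  simpa only [Finset.inf'_univ_eq_ciInf] using
    ContinuousOn.finset_inf'_apply Finset.univ_nonempty fun i _ ↦ hf i

/-- Nonnegativity is needed since in `ℝ` the terms `⨆ _ : y ∈ s, f y` with `y ∉ s` are `0`. -/
theorem IsMaxOn.eq_iSup_mem {α : Type*} {f : α → ℝ} {s : Set α} {x : α} (hx : x ∈ s)
    (hmax : IsMaxOn f s x) (h0 : 0 ≤ f x) : f x = ⨆ y ∈ s, f y := by
  have hbound : ∀ y, (⨆ _ : y ∈ s, f y) ≤ f x := fun y ↦ Real.iSup_le (fun hy ↦ hmax hy) h0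
  refine le_antisymm ?_ (Real.iSup_le hbound h0)
  exact le_ciSup_of_le ⟨f x, forall_mem_range.2 hbound⟩ x (ciSup_pos (f := fun _ ↦ f x) hx).ge

theorem IsCompact.exists_isMaxOn_isMinOn {α : Type*} [TopologicalSpace α] [T2Space α]
    {s : Set α} (hs : IsCompact s) (hne : s.Nonempty) {f g : α → ℝ}
    (hf : ContinuousOn f s) (hg : ContinuousOn g s) :
    ∃ x ∈ s, IsMaxOn f s x ∧ ∀ y ∈ s, IsMaxOn f s y → g x ≤ g y := by
  obtain ⟨x₀, hx₀, hmax₀⟩ := hs.exists_isMaxOn hne hf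
  have hA : IsCompact (s ∩ f ⁻¹' {f x₀}) :=
    hs.of_isClosed_subset (hf.preimage_isClosed_of_isClosed hs.isClosed isClosed_singleton)
      inter_subset_left
  obtain ⟨x, ⟨hx, hfx⟩, hmin⟩ := hA.exists_isMinOn ⟨x₀, hx₀, rfl⟩ (hg.mono inter_subset_left)
  refine ⟨x, hx, fun y hy ↦ (hmax₀ hy).trans_eq hfx.symm, fun y hy hymax ↦ hmin ⟨hy, ?_⟩⟩
  exact le_antisymm (hmax₀ hy) (hymax hx₀)

theorem Finset.sum_update_lt_sum {ι : Type*} [Fintype ι] [DecidableEq ι] {p : ι → ℝ} {m : ι}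
    {t : ℝ} (ht : t < p m) : ∑ i, update p m t i < ∑ i, p i :=
  Finset.sum_lt_sum (fun i _ ↦ update_le_self_iff.2 ht.le i) ⟨m, Finset.mem_univ m, by simpa⟩

def powerSimplex (ι : Type*) [Fintype ι] : Set (ι → ℝ) :=
  {p | (∀ n, 0 ≤ p n) ∧ ∑ n, p n ≤ 1}

section PowerSimplex

variable {ι : Type*} [Fintype ι]

theorem zero_mem_powerSimplex : (0 : ι → ℝ) ∈ powerSimplex ι :=
  ⟨fun _ ↦ le_rfl, by simp⟩

theorem isCompact_powerSimplex : IsCompact (powerSimplex ι) := by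
  have hclosed : IsClosed (powerSimplex ι) :=
    (isClosed_Ici (a := (0 : ι → ℝ))).inter
      (isClosed_le (continuous_finsetSum _ fun i _ ↦ continuous_apply i) continuous_const)
  refine (isCompact_Icc (a := 0) (b := 1)).of_isClosed_subset hclosed
    fun p ⟨hp0, hp1⟩ ↦ ⟨hp0, fun n ↦ ?_⟩
  exact (Finset.single_le_sum (fun i _ ↦ hp0 i) (Finset.mem_univ n)).trans hp1

variable [DecidableEq ι]

theorem update_mem_powerSimplex {p : ι → ℝ} (hp : p ∈ powerSimplex ι) {m : ι} {t : ℝ}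
    (ht0 : 0 ≤ t) (ht : t ≤ p m) : update p m t ∈ powerSimplex ι := by
  refine ⟨fun n ↦ ?_, le_trans (Finset.sum_le_sum fun i _ ↦ update_le_self_iff.2 ht i) hp.2⟩
  rcases eq_or_ne n m with rfl | hn
  · simpa using ht0
  · simpa [hn] using hp.1 n

theorem exists_lt_update_of_lt {R : (ι → ℝ) → ℝ} (hR : ContinuousOn R (powerSimplex ι))
    {p : ι → ℝ} (hp : p ∈ powerSimplex ι) {m : ι} (hm : 0 < p m) {c : ℝ} (hc : c < R p) :
    ∃ t ∈ Ico 0 (p m), c < R (update p m t) := by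
  have hne : (𝓝[Ico 0 (p m)] p m).NeBot := by
    rw [← mem_closure_iff_nhdsWithin_neBot, closure_Ico hm.ne]
    exact ⟨hm.le, le_rfl⟩
  have hcont : ContinuousWithinAt (fun t ↦ R (update p m t)) (Ico 0 (p m)) (p m) := by
    refine ContinuousWithinAt.comp (t := powerSimplex ι) ?_
      (continuous_const.update m continuous_id).continuousWithinAt
      fun t ht ↦ update_mem_powerSimplex hp ht.1 ht.2.le
    simpa using hR p hp
  obtain ⟨t, hct, ht⟩ := ((hcont.eventually (Ioi_mem_nhds (by simpa using hc))).and
    self_mem_nhdsWithin).exists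
  exact ⟨t, ht, hct⟩

end PowerSimplex

section MaxMinRate

variable {ι : Type*} [Fintype ι] {R : ι → (ι → ℝ) → ℝ}

theorem iInf_nonneg_of_isMaxOn (hzero : ∀ n, ∀ p ∈ powerSimplex ι, p n = 0 → R n p = 0)
    {p : ι → ℝ} (hmax : IsMaxOn (fun p ↦ ⨅ n, R n p) (powerSimplex ι) p) : 0 ≤ ⨅ n, R n p := by
  have hR0 : ⨅ n, R n 0 = 0 := by
    simp [hzero _ 0 zero_mem_powerSimplex rfl]
  exact hR0 ▸ hmax zero_mem_powerSimplex

theorem rate_eq_iInf_of_isMaxOn_of_sum_le [DecidableEq ι] [Nonempty ι]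
    (hcont : ∀ n, ContinuousOn (R n) (powerSimplex ι))
    (hzero : ∀ n, ∀ p ∈ powerSimplex ι, p n = 0 → R n p = 0)
    (hanti : ∀ n, ∀ i, i ≠ n → ∀ p ∈ powerSimplex ι, ∀ q ∈ powerSimplex ι,
      (∀ j, j ≠ i → p j = q j) → p i ≤ q i → R n q ≤ R n p)
    {p : ι → ℝ} (hp : p ∈ powerSimplex ι)
    (hmax : IsMaxOn (fun p ↦ ⨅ n, R n p) (powerSimplex ι) p)
    (hmin : ∀ q ∈ powerSimplex ι, IsMaxOn (fun p ↦ ⨅ n, R n p) (powerSimplex ι) q →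
      ∑ i, p i ≤ ∑ i, q i)
    (m : ι) : R m p = ⨅ n, R n p := by
  by_contra hne
  have hlt : ⨅ n, R n p < R m p := (ciInf_le (Finite.bddBelow_range _) m).lt_of_ne' hne
  have hV := iInf_nonneg_of_isMaxOn hzero hmax
  have hpos : 0 < p m := (hp.1 m).lt_of_ne fun h ↦ by linarith [hzero m p hp h.symm]
  obtain ⟨t, ⟨ht0, htm⟩, hVt⟩ := exists_lt_update_of_lt (hcont m) hp hpos hlt
  have hq : update p m t ∈ powerSimplex ι := update_mem_powerSimplex hp ht0 htm.le
  have hVq : ⨅ n, R n p ≤ ⨅ n, R n (update p m t) := le_ciInf fun n ↦ by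
    rcases eq_or_ne n m with rfl | hnm
    · exact hVt.le
    · refine (ciInf_le (Finite.bddBelow_range _) n).trans
        (hanti n m hnm.symm _ hq p hp (fun j hj ↦ update_of_ne hj _ _) ?_)
      simpa using htm.le
  have hqmax : IsMaxOn (fun p ↦ ⨅ n, R n p) (powerSimplex ι) (update p m t) :=
    fun r hr ↦ (hmax hr).trans hVq
  exact (hmin _ hq hqmax).not_gt (Finset.sum_update_lt_sum htm)

end MaxMinRate

theorem stmt_0_general (N : ℕ) (hN : 1 ≤ N)
    (R : Fin N → (Fin N → ℝ) → ℝ)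
    (Δ : Set (Fin N → ℝ))
    (hΔ : Δ = {p : Fin N → ℝ | (∀ n, 0 ≤ p n) ∧ ∑ n, p n ≤ 1})
    (hcont : ∀ n, ContinuousOn (R n) Δ)
    (hzero : ∀ n, ∀ p ∈ Δ, p n = 0 → R n p = 0)
    (hanti : ∀ n, ∀ i, i ≠ n → ∀ p ∈ Δ, ∀ q ∈ Δ,
      (∀ j, j ≠ i → p j = q j) → p i ≤ q i → R n q ≤ R n p) :
    ∃ pstar ∈ Δ,
      ((⨅ n, R n pstar) = ⨆ p ∈ Δ, ⨅ n, R n p) ∧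
      ∀ n m, R n pstar = R m pstar := by
  have : Nonempty (Fin N) := ⟨⟨0, hN⟩⟩
  obtain rfl : Δ = powerSimplex (Fin N) := hΔ
  obtain ⟨p, hp, hmax, hmin⟩ := isCompact_powerSimplex.exists_isMaxOn_isMinOn
    ⟨0, zero_mem_powerSimplex⟩ (ContinuousOn.iInf_apply hcont)
    (continuous_finsetSum _ fun i _ ↦ continuous_apply i).continuousOn
  have hrate := rate_eq_iInf_of_isMaxOn_of_sum_le hcont hzero hanti hp hmax hmin
  exact ⟨p, hp, hmax.eq_iSup_mem hp (iInf_nonneg_of_isMaxOn hzero hmax),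
    fun n m ↦ (hrate n).trans (hrate m).symm⟩

/-- There exists an optimal solution of the max-min rate power allocation problem
at which all users achieve the same rate. -/
theorem stmt_0 (N : ℕ) (hN : 1 ≤ N)
    (R : Fin N → (Fin N → ℝ) → ℝ)
    (Δ : Set (Fin N → ℝ))
    (hΔ : Δ = {p : Fin N → ℝ | (∀ n, 0 ≤ p n) ∧ ∑ n, p n ≤ 1})
    (hcont : ∀ n, ContinuousOn (R n) Δ)
    (hzero : ∀ n, ∀ p ∈ Δ, p n = 0 → R n p = 0)
    (hmono : ∀ n, ∀ p ∈ Δ, ∀ q ∈ Δ,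
      (∀ i, i ≠ n → p i = q i) → p n < q n → R n p < R n q)
    (hanti : ∀ n, ∀ i, i ≠ n → ∀ p ∈ Δ, ∀ q ∈ Δ,
      (∀ j, j ≠ i → p j = q j) → p i ≤ q i → R n q ≤ R n p) :
    ∃ pstar ∈ Δ,
      ((⨅ n, R n pstar) = ⨆ p ∈ Δ, ⨅ n, R n p) ∧
      ∀ n m, R n pstar = R m pstar :=
  stmt_0_general N hN R Δ hΔ hcont hzero hanti
end

section
/- Feasibility characterization of a target SINR: let A be an N × N real matrix with nonnegative entries whose powers (Aᵏ)_{k∈ℕ} are summable with sum S = Σ'_{k} Aᵏ, let u ∈ ℝ^N have nonnegative entries, and set p = S·u. Then there exists q ∈ ℝ^N with q ≥ 0 entrywise, q ≥ A·q + u entrywise, and Σ_{n=1}^N q_n ≤ 1 if and only if Σ_{n=1}^N p_n ≤ 1. -/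
/-!
The partial sums `sₖ = (∑_{j<k} Aʲ) u` satisfy `s₀ = 0` and `sₖ₊₁ = u + A sₖ`. Since `A` is
entrywise nonnegative, multiplication by `A` is monotone, so by induction every nonnegative `q`
with `A q + u ≤ q` dominates every `sₖ`, hence their limit `p`: the vector `p` is the least
nonnegative solution of the SINR constraints, which makes it feasible exactly when the sum power
constraint holds for `p` itself. That `p` is a solution at all is the geometric series identity
`(1 - A) ∑ₖ Aᵏ = 1`.
-/

open Filter Finset Topology

namespace Matrix

variable {n R : Type*} [Fintype n]

theorem geom_sum_mulVec_succ [Semiring R] [DecidableEq n] (A : Matrix n n R) (u : n → R)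
    (k : ℕ) :
    (∑ j ∈ range (k + 1), A ^ j) *ᵥ u = u + A *ᵥ ((∑ j ∈ range k, A ^ j) *ᵥ u) := by
  simp only [sum_range_succ', pow_succ', ← mul_sum, add_comm, add_mulVec, pow_zero, one_mulVec,
    mulVec_mulVec]

section Order

variable [Semiring R] [PartialOrder R] [IsOrderedRing R] {A : Matrix n n R}

theorem mulVec_mono (hA : ∀ i j, 0 ≤ A i j) {x y : n → R} (hxy : x ≤ y) :
    A *ᵥ x ≤ A *ᵥ y := fun i =>
  sum_le_sum fun j _ => mul_le_mul_of_nonneg_left (hxy j) (hA i j)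

theorem mulVec_nonneg (hA : ∀ i j, 0 ≤ A i j) {x : n → R} (hx : 0 ≤ x) : 0 ≤ A *ᵥ x := by
  simpa using mulVec_mono hA hx

variable [DecidableEq n]

theorem geom_sum_mulVec_nonneg (hA : ∀ i j, 0 ≤ A i j) {u : n → R} (hu : 0 ≤ u) (k : ℕ) :
    0 ≤ (∑ j ∈ range k, A ^ j) *ᵥ u := by
  induction k with
  | zero => simp
  | succ k ih =>
    rw [geom_sum_mulVec_succ]
    exact add_nonneg hu (mulVec_nonneg hA ih)

theorem geom_sum_mulVec_le (hA : ∀ i j, 0 ≤ A i j) {u q : n → R} (hq₀ : 0 ≤ q)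
    (hq : A *ᵥ q + u ≤ q) (k : ℕ) : (∑ j ∈ range k, A ^ j) *ᵥ u ≤ q := by
  induction k with
  | zero => simpa using hq₀
  | succ k ih =>
    calc (∑ j ∈ range (k + 1), A ^ j) *ᵥ u
        = u + A *ᵥ ((∑ j ∈ range k, A ^ j) *ᵥ u) := geom_sum_mulVec_succ A u k
      _ ≤ u + A *ᵥ q := add_le_add_right (mulVec_mono hA ih) u
      _ ≤ q := by rwa [add_comm]

end Order

section Topology

variable [DecidableEq n] [TopologicalSpace R]

theorem tendsto_geom_sum_mulVec [Semiring R] [IsTopologicalSemiring R] {A : Matrix n n R}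
    (hsum : Summable (A ^ ·)) (u : n → R) :
    Tendsto (fun k => (∑ j ∈ range k, A ^ j) *ᵥ u) atTop (𝓝 ((∑' k, A ^ k) *ᵥ u)) :=
  (continuous_id.matrix_mulVec continuous_const).continuousAt.tendsto.comp
    hsum.hasSum.tendsto_sum_nat

section Order

variable [Semiring R] [PartialOrder R] [IsOrderedRing R] [IsTopologicalSemiring R]
  [OrderClosedTopology R] {A : Matrix n n R}

theorem tsum_pow_mulVec_nonneg (hA : ∀ i j, 0 ≤ A i j) (hsum : Summable (A ^ ·)) {u : n → R}
    (hu : 0 ≤ u) : 0 ≤ (∑' k, A ^ k) *ᵥ u :=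
  ge_of_tendsto' (tendsto_geom_sum_mulVec hsum u) (geom_sum_mulVec_nonneg hA hu)

theorem tsum_pow_mulVec_le (hA : ∀ i j, 0 ≤ A i j) (hsum : Summable (A ^ ·)) {u q : n → R}
    (hq₀ : 0 ≤ q) (hq : A *ᵥ q + u ≤ q) : (∑' k, A ^ k) *ᵥ u ≤ q :=
  le_of_tendsto' (tendsto_geom_sum_mulVec hsum u) (geom_sum_mulVec_le hA hq₀ hq)

end Order

theorem mulVec_tsum_pow_mulVec_add [Ring R] [IsTopologicalRing R] [T2Space R]
    {A : Matrix n n R} (hsum : Summable (A ^ ·)) (u : n → R) :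
    A *ᵥ ((∑' k, A ^ k) *ᵥ u) + u = (∑' k, A ^ k) *ᵥ u := by
  have h := congrArg (· *ᵥ u) hsum.one_sub_mul_tsum_pow
  simp only [← mulVec_mulVec, sub_mulVec, one_mulVec, sub_eq_iff_eq_add'] at h
  exact h.symm

end Topology

end Matrix

open Matrix in
/-- Feasibility characterization of a target SINR. -/
theorem stmt_11 (N : ℕ) (A : Matrix (Fin N) (Fin N) ℝ)
    (hA : ∀ i j, 0 ≤ A i j)
    (hsum : Summable (fun k : ℕ => A ^ k))
    (u : Fin N → ℝ) (hu : ∀ n, 0 ≤ u n)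
    (p : Fin N → ℝ) (hp : p = (∑' k : ℕ, A ^ k).mulVec u) :
    (∃ q : Fin N → ℝ, (∀ n, 0 ≤ q n) ∧ (∀ n, A.mulVec q n + u n ≤ q n) ∧
      (∑ n, q n) ≤ 1) ↔ (∑ n, p n) ≤ 1 := by
  subst hp
  constructor
  · rintro ⟨q, hq₀, hq, hq₁⟩
    exact (sum_le_sum fun n _ => tsum_pow_mulVec_le hA hsum hq₀ hq n).trans hq₁
  · intro hp₁
    exact ⟨_, tsum_pow_mulVec_nonneg hA hsum hu,
      fun n => (mulVec_tsum_pow_mulVec_add hsum u).le n, hp₁⟩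
end

section
/- Global optimality of the bisection power allocation: let N ≥ 1, a_n > 0, b_{n,i} ≥ 0 for i ≠ n, σ² > 0, and γ_n(p) = a_n p_n / (Σ_{i≠n} b_{n,i} p_i + σ²). Let τ* = max_{p ∈ Δ} min_n γ_n(p) be the optimal max-min SINR over the power simplex Δ, define F_{n,i} = b_{n,i}/a_n for i ≠ n, F_{n,n} = 0, and u_n = σ²/a_n, and assume the powers ((τ*F)ᵏ)_{k∈ℕ} are summable with sum S. Then p* = τ*·(S·u) belongs to Δ and satisfies min_n γ_n(p*) = τ*; hence p* is a global maximizer of min_n γ_n over Δ. -/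
section Aux
variable {N : ℕ}

lemma aux_mul_tsum (M : Matrix (Fin N) (Fin N) ℝ) (hsum : Summable (fun k : ℕ => M ^ k)) :
    M * (∑' k : ℕ, M ^ k) = (∑' k : ℕ, M ^ k) - 1 := by
  have h1 : (∑' k : ℕ, M ^ k) = 1 + ∑' k : ℕ, M ^ (k + 1) := by
    rw [Summable.tsum_eq_zero_add hsum, pow_zero]
  have h2 : (∑' k : ℕ, M ^ (k + 1)) = M * ∑' k : ℕ, M ^ k := by
    simp_rw [pow_succ']
    exact hsum.tsum_mul_left M
  rw [eq_sub_iff_add_eq, ← h2, add_comm]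
  exact h1.symm

lemma aux_tsum_mul (M : Matrix (Fin N) (Fin N) ℝ) (hsum : Summable (fun k : ℕ => M ^ k)) :
    (∑' k : ℕ, M ^ k) * M = (∑' k : ℕ, M ^ k) - 1 := by
  have h1 : (∑' k : ℕ, M ^ k) = 1 + ∑' k : ℕ, M ^ (k + 1) := by
    rw [Summable.tsum_eq_zero_add hsum, pow_zero]
  have h2 : (∑' k : ℕ, M ^ (k + 1)) = (∑' k : ℕ, M ^ k) * M := by
    simp_rw [pow_succ]
    exact hsum.tsum_mul_right M
  rw [eq_sub_iff_add_eq, ← h2, add_comm]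
  exact h1.symm

lemma aux_tsum_apply (M : Matrix (Fin N) (Fin N) ℝ) (hsum : Summable (fun k : ℕ => M ^ k))
    (n i : Fin N) : (∑' k : ℕ, M ^ k) n i = ∑' k : ℕ, (M ^ k) n i := by
  exact ((Pi.hasSum.mp (Pi.hasSum.mp hsum.hasSum n) i)).tsum_eq.symm

lemma aux_tsum_nonneg (M : Matrix (Fin N) (Fin N) ℝ) (hsum : Summable (fun k : ℕ => M ^ k))
    (hM : ∀ n i, 0 ≤ M n i) (n i : Fin N) : 0 ≤ (∑' k : ℕ, M ^ k) n i := by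
  rw [aux_tsum_apply M hsum]
  refine tsum_nonneg fun k => ?_
  induction k generalizing n i with
  | zero => simp [Matrix.one_apply]; positivity
  | succ m ih =>
      rw [pow_succ', Matrix.mul_apply]
      exact Finset.sum_nonneg fun j _ => mul_nonneg (hM n j) (ih j i)
end Aux

/-- Global optimality of the bisection power allocation. -/
theorem stmt_14 (N : ℕ) (hN : 1 ≤ N)
    (a : Fin N → ℝ) (b : Fin N → Fin N → ℝ) (σsq : ℝ)
    (ha : ∀ n, 0 < a n) (hb : ∀ n i, i ≠ n → 0 ≤ b n i) (hσ : 0 < σsq)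
    (γ : (Fin N → ℝ) → Fin N → ℝ)
    (hγ : ∀ p n, γ p n = a n * p n / ((∑ i ∈ Finset.univ.erase n, b n i * p i) + σsq))
    (Δ : Set (Fin N → ℝ))
    (hΔ : Δ = {p : Fin N → ℝ | (∀ n, 0 ≤ p n) ∧ ∑ n, p n ≤ 1})
    (τstar : ℝ)
    (hτ : IsGreatest {x : ℝ | ∃ p ∈ Δ, x = ⨅ n, γ p n} τstar)
    (F : Matrix (Fin N) (Fin N) ℝ)
    (hF : ∀ n i, F n i = if i = n then 0 else b n i / a n)
    (u : Fin N → ℝ) (hu : ∀ n, u n = σsq / a n)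
    (hsum : Summable (fun k : ℕ => (τstar • F) ^ k))
    (pstar : Fin N → ℝ)
    (hp : pstar = τstar • (∑' k : ℕ, (τstar • F) ^ k).mulVec u) :
    pstar ∈ Δ ∧ (⨅ n, γ pstar n) = τstar ∧
    ∀ p ∈ Δ, (⨅ n, γ p n) ≤ (⨅ n, γ pstar n) := by
  haveI : Nonempty (Fin N) := ⟨⟨0, hN⟩⟩
  set S := ∑' k : ℕ, (τstar • F) ^ k with hSdef
  -- τstar is nonnegative
  have hzeroΔ : (0 : Fin N → ℝ) ∈ Δ := by
    rw [hΔ]; exact ⟨fun n => le_refl 0, by simp⟩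
  have hγ0 : ∀ n, γ 0 n = 0 := fun n => by simp [hγ]
  have hinf0 : (⨅ n, γ 0 n) = 0 := by simp only [hγ0]; exact ciInf_const
  have hτ0 : 0 ≤ τstar := hτ.2 ⟨0, hzeroΔ, hinf0.symm⟩
  -- entrywise nonnegativity
  have hFnn : ∀ n i, 0 ≤ F n i := by
    intro n i; rw [hF]
    split
    · exact le_refl 0
    · exact div_nonneg (hb n i (by assumption)) (ha n).le
  have hMnn : ∀ n i, 0 ≤ (τstar • F) n i := by
    intro n i
    simpa using mul_nonneg hτ0 (hFnn n i)
  have hSnn : ∀ n i, 0 ≤ S n i := aux_tsum_nonneg _ hsum hMnn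
  have hMS : (τstar • F) * S = S - 1 := aux_mul_tsum _ hsum
  have hSM : S * (τstar • F) = S - 1 := aux_tsum_mul _ hsum
  -- mulVec of τstar • F in explicit form
  have hmv : ∀ (v : Fin N → ℝ) n, ((τstar • F).mulVec v) n
      = τstar / a n * ∑ i ∈ Finset.univ.erase n, b n i * v i := by
    intro v n
    rw [Matrix.mulVec, dotProduct,
      ← Finset.sum_erase_add _ _ (Finset.mem_univ n)]
    have hzero : (τstar • F) n n * v n = 0 := by
      simp [hF]
    rw [hzero, add_zero, Finset.mul_sum]
    refine Finset.sum_congr rfl fun i hi => ?_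
    have hi' : i ≠ n := Finset.ne_of_mem_erase hi
    rw [Matrix.smul_apply, hF, if_neg hi', smul_eq_mul]
    ring
  -- pstar is nonnegative
  have hpsnn : ∀ n, 0 ≤ pstar n := by
    intro n
    rw [hp]
    simp only [Pi.smul_apply, smul_eq_mul]
    refine mul_nonneg hτ0 ?_
    rw [Matrix.mulVec, dotProduct]
    refine Finset.sum_nonneg fun i _ => mul_nonneg (hSnn n i) ?_
    rw [hu]; exact div_nonneg hσ.le (ha i).le
  -- the balance equation
  have hbal : (τstar • F).mulVec pstar = pstar - τstar • u := by
    rw [hp, Matrix.mulVec_smul, Matrix.mulVec_mulVec, hMS, Matrix.sub_mulVec,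
      Matrix.one_mulVec, smul_sub]
  have hcomp : ∀ n, a n * pstar n
      = τstar * ((∑ i ∈ Finset.univ.erase n, b n i * pstar i) + σsq) := by
    intro n
    have h := congrFun hbal n
    rw [hmv] at h
    simp only [Pi.sub_apply, Pi.smul_apply, smul_eq_mul, hu] at h
    field_simp [(ha n).ne'] at h ⊢
    linarith
  -- γ at pstar equals τstar everywhere
  have hγps : ∀ n, γ pstar n = τstar := by
    intro n
    have hD : 0 < (∑ i ∈ Finset.univ.erase n, b n i * pstar i) + σsq := by
      refine add_pos_of_nonneg_of_pos (Finset.sum_nonneg fun i hi => ?_) hσ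
      exact mul_nonneg (hb n i (Finset.ne_of_mem_erase hi)) (hpsnn i)
    rw [hγ, hcomp n, mul_div_assoc, div_self hD.ne', mul_one]
  have hinfps : (⨅ n, γ pstar n) = τstar := by
    simp only [hγps]; exact ciInf_const
  -- the optimal point q dominates pstar
  obtain ⟨q, hqΔ, hqeq⟩ := hτ.1
  have hqΔ' := hqΔ
  rw [hΔ] at hqΔ'
  obtain ⟨hq0, hq1⟩ := hqΔ'
  have hγq : ∀ n, τstar ≤ γ q n := by
    intro n
    rw [hqeq]
    exact ciInf_le (Set.finite_range _).bddBelow n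
  have hqkey : ∀ n, τstar * u n ≤ q n - ((τstar • F).mulVec q) n := by
    intro n
    have hD : 0 < (∑ i ∈ Finset.univ.erase n, b n i * q i) + σsq := by
      refine add_pos_of_nonneg_of_pos (Finset.sum_nonneg fun i hi => ?_) hσ
      exact mul_nonneg (hb n i (Finset.ne_of_mem_erase hi)) (hq0 i)
    have h1 : τstar * ((∑ i ∈ Finset.univ.erase n, b n i * q i) + σsq) ≤ a n * q n := by
      have h := hγq n
      rw [hγ] at h
      exact (le_div_iff₀ hD).mp h
    rw [hmv, hu, le_sub_iff_add_le,
      show τstar * (σsq / a n) + τstar / a n * (∑ i ∈ Finset.univ.erase n, b n i * q i)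
        = τstar * ((∑ i ∈ Finset.univ.erase n, b n i * q i) + σsq) / a n from by ring,
      div_le_iff₀ (ha n)]
    linarith
  have hSq : S.mulVec (q - (τstar • F).mulVec q) = q := by
    rw [Matrix.mulVec_sub, Matrix.mulVec_mulVec, hSM, Matrix.sub_mulVec,
      Matrix.one_mulVec, sub_sub_cancel]
  have hple : ∀ n, pstar n ≤ q n := by
    intro n
    have h1 : pstar n = (S.mulVec (τstar • u)) n := by
      rw [hp, Matrix.mulVec_smul]
    rw [h1, ← hSq]
    rw [Matrix.mulVec, Matrix.mulVec, dotProduct, dotProduct]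
    refine Finset.sum_le_sum fun i _ => ?_
    refine mul_le_mul_of_nonneg_left ?_ (hSnn n i)
    simpa using hqkey i
  have hmem : pstar ∈ Δ := by
    rw [hΔ]
    refine ⟨hpsnn, ?_⟩
    calc ∑ n, pstar n ≤ ∑ n, q n := Finset.sum_le_sum fun n _ => hple n
    _ ≤ 1 := hq1
  refine ⟨hmem, hinfps, fun p hpΔ => ?_⟩
  rw [hinfps]
  exact hτ.2 ⟨p, hpΔ, rfl⟩
end
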